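/- In F_n (n ≥ 2), l_{a_1} - r_{a_1} = Σ_{s ∈ S̄, s ≠ a_1^{-1}} p_{a_1 s} - Σ_{s ∈ S̄, s ≠ a_1^{-1}} p_{s a_1} as functions on F_n, and in particular this function is bounded (taking values in {-1, 0, 1}). -/
import Mathlib


open List Finset

/-- Number of occurrences of `w` as a contiguous subword of `v`. -/
def occ {α : Type*} [DecidableEq α] (w v : List α) : ℕ :=
  ((List.range (v.length + 1 - w.length)).filter (fun i => decide (w <+: v.drop i))).length

/-- Elementary counting function, with the convention `p_ε(v) = |v|`. -/
def cnt {α : Type*} [DecidableEq α] (w v : List α) : ℚ :=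
  if w = [] then v.length else occ w v

/-- The inverse of a letter of `S̄`: letters are pairs (generator, sign). -/
def invL {n : ℕ} (a : Fin n × Bool) : Fin n × Bool := (a.1, !a.2)

/-- The inverse of a (reduced) word. -/
def invW {n : ℕ} (w : List (Fin n × Bool)) : List (Fin n × Bool) := (w.map invL).reverse

def redB {n : ℕ} : List (Fin n × Bool) → Bool
  | a :: b :: t => decide (b ≠ invL a) && redB (b :: t)
  | _ => true

/-- A word over `S̄` is reduced if no letter is followed by its inverse. -/
def Red {n : ℕ} (w : List (Fin n × Bool)) : Prop := redB w = true

instance {n : ℕ} : DecidablePred (Red (n := n)) := fun _ => instDecidableEqBool _ _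

/-- Left extension relation `l_w = p_w - Σ_{s : sw reduced} p_{sw}`. -/
def lgrp {n : ℕ} (w v : List (Fin n × Bool)) : ℚ :=
  cnt w v - ∑ s ∈ Finset.univ.filter (fun s => Red (s :: w)), cnt (s :: w) v

/-- Right extension relation `r_w = p_w - Σ_{s : ws reduced} p_{ws}`. -/
def rgrp {n : ℕ} (w v : List (Fin n × Bool)) : ℚ :=
  cnt w v - ∑ s ∈ Finset.univ.filter (fun s => Red (w ++ [s])), cnt (w ++ [s]) v

/-- The map `σ₁` sending a function on F_n to `f - f ∘ (·⁻¹)`; on counting functions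
it sends `p_w` to the Brooks quasimorphism `φ_w = p_w - p_{w⁻¹}`. -/
def sig1 {n : ℕ} (f : List (Fin n × Bool) → ℚ) : List (Fin n × Bool) → ℚ :=
  fun v => f v - f (invW v)

-- auxiliary lemmas
lemma occ_cons {α : Type*} [DecidableEq α] (w : List α) (hw : w ≠ []) (c : α) (v : List α) :
    occ w (c :: v) = (if w <+: c :: v then 1 else 0) + occ w v := by
  unfold occ
  rcases le_or_gt w.length (v.length + 1) with h | h
  · have h1 : (c::v).length + 1 - w.length = (v.length + 1 - w.length) + 1 := by
      simp only [List.length_cons]; omega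
    rw [h1, List.range_succ_eq_map, List.filter_cons]
    simp only [List.drop_zero]
    rw [List.filter_map]
    have : (fun i => decide (w <+: (c::v).drop i)) ∘ Nat.succ
        = fun i => decide (w <+: v.drop i) := by
      funext i; simp [List.drop_succ_cons]
    rw [this]
    by_cases hp : w <+: c :: v <;> simp [hp, Nat.add_comm]
  · have h1 : (c::v).length + 1 - w.length ≤ 1 := by simp; omega
    have h2 : v.length + 1 - w.length = 0 := by omega
    have hp : ¬ (w <+: c :: v) := by
      intro hp; have := hp.length_le; simp at this; omega
    rw [h2]
    interval_cases hh : ((c::v).length + 1 - w.length) <;> simp [hp, List.range_succ]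

lemma invL_invL {n : ℕ} (a : Fin n × Bool) : invL (invL a) = a := by
  simp [invL]

lemma ne_invL_comm {n : ℕ} (a s : Fin n × Bool) : a ≠ invL s ↔ s ≠ invL a := by
  constructor <;> (intro h he; apply h; rw [he, invL_invL])

lemma red_tail {n : ℕ} {c : Fin n × Bool} {v : List (Fin n × Bool)} (h : Red (c :: v)) :
    Red v := by
  cases v with
  | nil => rfl
  | cons d t => simp only [Red, redB, Bool.and_eq_true] at h ⊢; exact h.2

lemma red_head {n : ℕ} {c d : Fin n × Bool} {t : List (Fin n × Bool)}
    (h : Red (c :: d :: t)) : d ≠ invL c := by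
  simp only [Red, redB, Bool.and_eq_true, decide_eq_true_eq] at h; exact h.1

lemma single_prefix {α : Type*} (x c : α) (v : List α) : [x] <+: c :: v ↔ x = c := by
  rw [List.cons_prefix_cons]; simp

lemma pair_prefix {α : Type*} (x y c d : α) (v : List α) :
    [x, y] <+: c :: d :: v ↔ x = c ∧ y = d := by
  rw [List.cons_prefix_cons, single_prefix]

lemma not_pair_prefix_single {α : Type*} (x y c : α) : ¬ ([x, y] <+: [c]) := by
  intro h; have := h.length_le; simp at this

open Finset in
lemma key {n : ℕ} (a : Fin n × Bool) (v : List (Fin n × Bool)) (hv : Red v) :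
    ((∑ s ∈ Finset.univ.filter (fun s : Fin n × Bool => s ≠ invL a), (occ [a, s] v : ℚ)) -
      ∑ s ∈ Finset.univ.filter (fun s : Fin n × Bool => s ≠ invL a), (occ [s, a] v : ℚ)) =
    (if [a] <+: v then 1 else 0) - (if [a] <:+ v then 1 else 0) := by
  induction v with
  | nil => simp [occ]
  | cons c v ih =>
    have hv' : Red v := red_tail hv
    have hocc : ∀ x y : Fin n × Bool, (occ [x, y] (c :: v) : ℚ) =
        (if [x, y] <+: c :: v then 1 else 0) + occ [x, y] v := by
      intro x y; rw [occ_cons _ (by simp)]; push_cast; ring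
    simp only [hocc, Finset.sum_add_distrib]
    cases v with
    | nil =>
      simp [occ, not_pair_prefix_single, single_prefix, List.suffix_cons_iff]
    | cons d t =>
      have hd : d ≠ invL c := red_head hv
      have hS1 : (∑ s ∈ Finset.univ.filter (fun s : Fin n × Bool => s ≠ invL a),
          (if [a, s] <+: c :: d :: t then (1:ℚ) else 0)) = if a = c then 1 else 0 := by
        rw [Finset.sum_congr rfl (fun s _ => by
          rw [show (if [a, s] <+: c :: d :: t then (1:ℚ) else 0)
            = if s = d then (if a = c then 1 else 0) else 0 by
              simp only [pair_prefix]
              by_cases h1 : a = c <;> by_cases h2 : s = d <;> simp [h1, h2]])]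
        rw [Finset.sum_ite_eq' ]
        by_cases h1 : a = c
        · have : d ∈ Finset.univ.filter (fun s : Fin n × Bool => s ≠ invL a) := by
            simp [Finset.mem_filter, h1, hd]
          simp [this]
        · simp [h1]
      have hS2 : (∑ s ∈ Finset.univ.filter (fun s : Fin n × Bool => s ≠ invL a),
          (if [s, a] <+: c :: d :: t then (1:ℚ) else 0)) = if a = d then 1 else 0 := by
        rw [Finset.sum_congr rfl (fun s _ => by
          rw [show (if [s, a] <+: c :: d :: t then (1:ℚ) else 0)
            = if s = c then (if a = d then 1 else 0) else 0 by
              simp only [pair_prefix]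
              by_cases h1 : a = d <;> by_cases h2 : s = c <;> simp [h1, h2]])]
        rw [Finset.sum_ite_eq']
        by_cases h1 : a = d
        · have hc : c ≠ invL a := by
            intro he; exact hd (by rw [← h1, he, invL_invL])
          have : c ∈ Finset.univ.filter (fun s : Fin n × Bool => s ≠ invL a) := by
            simp [Finset.mem_filter, hc]
          simp [this]
        · simp [h1]
      rw [hS1, hS2]
      have hsuf : ([a] <:+ c :: d :: t) ↔ ([a] <:+ d :: t) := by
        rw [List.suffix_cons_iff]; simp
      have hL := ih hv'
      simp only [single_prefix] at hL ⊢
      simp only [hsuf]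
      linarith [hL]

lemma lgrp_sub_rgrp {n : ℕ} (a : Fin n × Bool) (v : List (Fin n × Bool)) :
    lgrp [a] v - rgrp [a] v =
      (∑ s ∈ Finset.univ.filter (fun s : Fin n × Bool => s ≠ invL a), (occ [a, s] v : ℚ)) -
      ∑ s ∈ Finset.univ.filter (fun s : Fin n × Bool => s ≠ invL a), (occ [s, a] v : ℚ) := by
  unfold lgrp rgrp
  have h1 : Finset.univ.filter (fun s : Fin n × Bool => Red (s :: [a]))
      = Finset.univ.filter (fun s : Fin n × Bool => s ≠ invL a) := by
    ext s; simp [Red, redB, ne_invL_comm]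
  have h2 : Finset.univ.filter (fun s : Fin n × Bool => Red ([a] ++ [s]))
      = Finset.univ.filter (fun s : Fin n × Bool => s ≠ invL a) := by
    ext s; simp [Red, redB]
  rw [h1, h2]
  simp only [cnt, List.cons_append, List.nil_append, reduceIte, List.cons_ne_nil,
    if_neg (List.cons_ne_nil _ _)]
  ring

/-- In F_n, l_{a₁} - r_{a₁} = Σ_{s ≠ a₁⁻¹} p_{a₁ s} - Σ_{s ≠ a₁⁻¹} p_{s a₁}, and this
function takes only the values -1, 0, 1 on reduced words, hence is bounded. -/
theorem stmt_15 (n : ℕ) (hn : 2 ≤ n) :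
    (∀ v : List (Fin n × Bool), Red v →
      lgrp [((⟨0, by omega⟩ : Fin n), true)] v - rgrp [((⟨0, by omega⟩ : Fin n), true)] v =
        (∑ s ∈ Finset.univ.filter
            (fun s : Fin n × Bool => s ≠ invL ((⟨0, by omega⟩ : Fin n), true)),
          (occ [((⟨0, by omega⟩ : Fin n), true), s] v : ℚ)) -
        ∑ s ∈ Finset.univ.filter
            (fun s : Fin n × Bool => s ≠ invL ((⟨0, by omega⟩ : Fin n), true)),
          (occ [s, ((⟨0, by omega⟩ : Fin n), true)] v : ℚ)) ∧
    (∀ v : List (Fin n × Bool), Red v →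
      lgrp [((⟨0, by omega⟩ : Fin n), true)] v - rgrp [((⟨0, by omega⟩ : Fin n), true)] v = -1 ∨
      lgrp [((⟨0, by omega⟩ : Fin n), true)] v - rgrp [((⟨0, by omega⟩ : Fin n), true)] v = 0 ∨
      lgrp [((⟨0, by omega⟩ : Fin n), true)] v - rgrp [((⟨0, by omega⟩ : Fin n), true)] v = 1) := by
  have hmain : ∀ v : List (Fin n × Bool), Red v →
      lgrp [((⟨0, by omega⟩ : Fin n), true)] v - rgrp [((⟨0, by omega⟩ : Fin n), true)] v =
        (∑ s ∈ Finset.univ.filter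
            (fun s : Fin n × Bool => s ≠ invL ((⟨0, by omega⟩ : Fin n), true)),
          (occ [((⟨0, by omega⟩ : Fin n), true), s] v : ℚ)) -
        ∑ s ∈ Finset.univ.filter
            (fun s : Fin n × Bool => s ≠ invL ((⟨0, by omega⟩ : Fin n), true)),
          (occ [s, ((⟨0, by omega⟩ : Fin n), true)] v : ℚ) := by
    intro v _
    exact lgrp_sub_rgrp _ v
  refine ⟨hmain, ?_⟩
  intro v hv
  rw [hmain v hv, key _ v hv]
  by_cases h1 : [((⟨0, by omega⟩ : Fin n), true)] <+: v <;>
    by_cases h2 : [((⟨0, by omega⟩ : Fin n), true)] <:+ v <;>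
      simp [h1, h2]
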